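/- arXiv:1609.03031 — 2 statements merged into one kernel-verified Lean document; each statement's English description precedes it below -/
import Mathlib

section
/- Let n be a square-free positive integer, let N and M be positive definite ternary forms such that (N, M) is a representable pair by scaling n, and let p be a prime dividing n. Then there exists a positive definite ternary form L such that (N, L) is a representable pair by scaling p and (L, M) is a representable pair by scaling n/p. -/
/-- A ternary quadratic form `Q(x,y,z) = ax² + by² + cz² + r·yz + s·zx + t·xy`
with integer coefficients. -/
structure TernaryForm where
  a : ℤ
  b : ℤ
  c : ℤ
  r : ℤ
  s : ℤ
  t : ℤ

/-- Evaluation of a ternary form on `R³` for any commutative ring `R`. -/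
def TernaryForm.eval {R : Type*} [CommRing R] (Q : TernaryForm) (v : Fin 3 → R) : R :=
  (Q.a : R) * v 0 ^ 2 + (Q.b : R) * v 1 ^ 2 + (Q.c : R) * v 2 ^ 2 +
    (Q.r : R) * v 1 * v 2 + (Q.s : R) * v 2 * v 0 + (Q.t : R) * v 0 * v 1

/-- A ternary form is positive definite if `Q(v) > 0` for all `v ≠ 0`. -/
def TernaryForm.PosDef (Q : TernaryForm) : Prop :=
  ∀ v : Fin 3 → ℤ, v ≠ 0 → 0 < Q.eval v

/-- The Gram matrix of a ternary form: the symmetric rational matrix `G`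
with `Q(v) = vᵀ G v`. -/
def TernaryForm.gram (Q : TernaryForm) : Matrix (Fin 3) (Fin 3) ℚ :=
  !![(Q.a : ℚ), (Q.t : ℚ) / 2, (Q.s : ℚ) / 2;
     (Q.t : ℚ) / 2, (Q.b : ℚ), (Q.r : ℚ) / 2;
     (Q.s : ℚ) / 2, (Q.r : ℚ) / 2, (Q.c : ℚ)]

/-- The discriminant of a ternary form: the determinant of its Gram matrix. -/
def TernaryForm.disc (Q : TernaryForm) : ℚ := Q.gram.det

/-- `(N, M)` is a representable pair by scaling `n` if `dN = n·dM` and there is a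
`ℤ`-linear map `T : ℤ³ → ℤ³` with `Q_N(T v) = n · Q_M(v)` for all `v`. -/
def RepPair (n : ℕ) (N M : TernaryForm) : Prop :=
  N.disc = (n : ℚ) * M.disc ∧
    ∃ T : (Fin 3 → ℤ) →ₗ[ℤ] (Fin 3 → ℤ), ∀ v, N.eval (T v) = (n : ℤ) * M.eval v

/-- The norm ideal of a subset `K ⊆ ℤ³`: the ideal of `ℤ` generated by `{Q(x) : x ∈ K}`. -/
def TernaryForm.normIdeal (Q : TernaryForm) (K : Set (Fin 3 → ℤ)) : Ideal ℤ :=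
  Ideal.span (Q.eval '' K)

/-- A ternary form is primitive if the norm ideal of `ℤ³` is all of `ℤ`. -/
def TernaryForm.Primitive (Q : TernaryForm) : Prop :=
  Q.normIdeal Set.univ = ⊤

/-- `Λ_p(N) = {x ∈ ℤ³ : Q_N(x + z) ≡ Q_N(z) (mod p) for all z ∈ ℤ³}`. -/
def LambdaSet (p : ℕ) (N : TernaryForm) : Set (Fin 3 → ℤ) :=
  {x | ∀ z : Fin 3 → ℤ, (p : ℤ) ∣ N.eval (x + z) - N.eval z}

/-- `M` is a `Γ_p`-descendant of `N` if there is a subgroup `K ≤ ℤ³` of index `p` with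
norm ideal `pℤ` and a group isomorphism `T : ℤ³ → K` with `Q_N(T v) = p · Q_M(v)`. -/
def GammaDescendant (p : ℕ) (M N : TernaryForm) : Prop :=
  ∃ K : AddSubgroup (Fin 3 → ℤ), K.index = p ∧
    N.normIdeal (K : Set (Fin 3 → ℤ)) = Ideal.span {(p : ℤ)} ∧
    ∃ T : (Fin 3 → ℤ) →+ (Fin 3 → ℤ), Function.Injective T ∧
      Set.range T = (K : Set (Fin 3 → ℤ)) ∧
      ∀ v, N.eval (T v) = (p : ℤ) * M.eval v

/-- `N` is `p`-hyperbolic with exponent `j` if over `ℤ_p` there are a unit `δ` and a basis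
`y₁, y₂, y₃` of `ℤ_p³` with `Q_N(a y₁ + b y₂ + c y₃) = ab + δ p^j c²`. -/
def IsHyperbolic (p : ℕ) [Fact p.Prime] (j : ℕ) (N : TernaryForm) : Prop :=
  ∃ δ : ℤ_[p], IsUnit δ ∧ ∃ B : Module.Basis (Fin 3) ℤ_[p] (Fin 3 → ℤ_[p]),
    ∀ a b c : ℤ_[p],
      N.eval (a • B 0 + b • B 1 + c • B 2) = a * b + δ * (p : ℤ_[p]) ^ j * c ^ 2

/-- Two ternary forms lie in the same genus if they are equivalent over `ℤ_ℓ`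
for every prime `ℓ`. -/
def SameGenus (M M' : TernaryForm) : Prop :=
  ∀ (ℓ : ℕ) [Fact ℓ.Prime], ∃ U : Matrix (Fin 3) (Fin 3) ℤ_[ℓ],
    IsUnit U.det ∧ ∀ v : Fin 3 → ℤ_[ℓ], M'.eval v = M.eval (U.mulVec v)


/-
Write the representation of `M` by `N` as `N(Tv) = n·M(v)` with `T` an integer matrix; comparing
discriminants gives `|det T| = n`. On the lattice `Λ = Tℤ³ + pℤ³` every value of `N` is divisible
by `p`, because `N(Tv) = n·M(v)` and `p ∣ n`. For a basis matrix `S` of `Λ`, `|det S|` divides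
`|det T| = n` (as `Tℤ³ ⊆ Λ`) and `p³` (as `pℤ³ ⊆ Λ`), and it is not `1` since `T` is singular
mod `p`; as `n` is squarefree, `|det S| = p`. Then `L = N ∘ S / p` is the middle form, and
writing `T = S U` exhibits `(L, M)` as a pair by scaling `n / p`.
-/

open Matrix

lemma Matrix.exists_mul_eq_of_range_le {m n k R : Type*} [Fintype n] [Fintype k] [DecidableEq k]
    [CommRing R] {A : Matrix m n R} {B : Matrix m k R}
    (h : LinearMap.range B.mulVecLin ≤ LinearMap.range A.mulVecLin) :
    ∃ C : Matrix n k R, A * C = B := by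
  choose w hw using fun j => h (LinearMap.mem_range_self B.mulVecLin (Pi.single j 1))
  refine ⟨Matrix.of fun i j => w j i, ?_⟩
  ext i j
  have := congrFun (hw j) i
  simp only [mulVecLin_apply, mulVec_single_one, col_apply] at this
  rw [mul_apply, ← this]
  rfl

lemma Submodule.exists_range_mulVecLin_eq {ι : Type*} [Fintype ι] (Λ : Submodule ℤ (ι → ℤ))
    {c : ℤ} (hc : c ≠ 0) (hΛ : ∀ x, c • x ∈ Λ) :
    ∃ S : Matrix ι ι ℤ, LinearMap.range S.mulVecLin = Λ := by
  obtain ⟨k, b⟩ := Λ.basisOfPid (Pi.basisFun ℤ ι)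
  have hk : k = Fintype.card ι := by
    have hle : k ≤ Fintype.card ι := by
      simpa [Module.finrank_eq_card_basis b] using Λ.finrank_le
    have hinj : Function.Injective (LinearMap.codRestrict Λ (c • LinearMap.id) hΛ) :=
      fun x y hxy => smul_right_injective _ hc (congrArg Subtype.val hxy)
    have hge := LinearMap.finrank_le_finrank_of_injective hinj
    simp only [Module.finrank_pi, Module.finrank_eq_card_basis b, Fintype.card_fin] at hge
    omega
  let b' := b.reindex (Fintype.equivFinOfCardEq hk.symm).symm
  refine ⟨Matrix.of fun i j => (b' j : ι → ℤ) i, ?_⟩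
  have hcol : (Matrix.of fun i j => (b' j : ι → ℤ) i).col = Λ.subtype ∘ b' := rfl
  rw [range_mulVecLin, hcol, Set.range_comp, Submodule.span_image, b'.span_eq, Submodule.map_top,
    Submodule.range_subtype]

namespace Matrix

variable {ι : Type*} [Fintype ι]

def rangeMod (T : Matrix ι ι ℤ) (m : ℤ) : Submodule ℤ (ι → ℤ) where
  carrier := {x | ∃ w, ∀ i, x i ≡ (T *ᵥ w) i [ZMOD m]}
  add_mem' := by
    rintro x y ⟨w, hw⟩ ⟨w', hw'⟩
    exact ⟨w + w', fun i => by simpa only [mulVec_add, Pi.add_apply] using (hw i).add (hw' i)⟩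
  zero_mem' := ⟨0, fun i => by simp [Int.ModEq.refl]⟩
  smul_mem' := by
    rintro c x ⟨w, hw⟩
    exact ⟨c • w, fun i => by
      simpa only [mulVec_smul, Pi.smul_apply, smul_eq_mul] using (hw i).mul_left c⟩

lemma mulVec_mem_rangeMod (T : Matrix ι ι ℤ) (m : ℤ) (v : ι → ℤ) : T *ᵥ v ∈ T.rangeMod m :=
  ⟨v, fun _ => Int.ModEq.refl _⟩

lemma smul_mem_rangeMod (T : Matrix ι ι ℤ) (m : ℤ) (x : ι → ℤ) : m • x ∈ T.rangeMod m :=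
  ⟨0, fun i => by simpa using Int.modEq_zero_iff_dvd.mpr (dvd_mul_right m (x i))⟩

lemma rangeMod_ne_top [DecidableEq ι] {p : ℕ} [Fact p.Prime] (T : Matrix ι ι ℤ)
    (hpT : (p : ℤ) ∣ T.det) : T.rangeMod p ≠ ⊤ := by
  intro htop
  have hsurj : Function.Surjective (T.map (Int.cast : ℤ → ZMod p)).mulVec := by
    intro y
    obtain ⟨w, hw⟩ : (fun i => ((y i).cast : ℤ)) ∈ T.rangeMod p := htop ▸ Submodule.mem_top
    refine ⟨fun i => (w i : ZMod p), funext fun i => ?_⟩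
    have := (ZMod.intCast_eq_intCast_iff _ _ _).mpr (hw i)
    rw [ZMod.intCast_cast, ZMod.cast_id', id] at this
    rw [this]
    exact (RingHom.map_mulVec (Int.castRingHom (ZMod p)) T w i).symm
  have hunit := isUnit_iff_isUnit_det _ |>.mp (mulVec_surjective_iff_isUnit.mp hsurj)
  rw [← Int.cast_det, (ZMod.intCast_zmod_eq_zero_iff_dvd _ _).mpr hpT] at hunit
  exact not_isUnit_zero hunit

theorem exists_mul_eq_natAbs_det_eq_prime [DecidableEq ι] {p : ℕ} (hp : p.Prime)
    (T : Matrix ι ι ℤ) (hpT : p ∣ T.det.natAbs) (hp2 : ¬ p ^ 2 ∣ T.det.natAbs) :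
    ∃ S U : Matrix ι ι ℤ, S * U = T ∧ S.det.natAbs = p ∧ ∀ v, S *ᵥ v ∈ T.rangeMod p := by
  have := Fact.mk hp
  obtain ⟨S, hS⟩ := (T.rangeMod p).exists_range_mulVecLin_eq (Nat.cast_ne_zero.mpr hp.ne_zero)
    (T.smul_mem_rangeMod p)
  obtain ⟨U, hU⟩ := exists_mul_eq_of_range_le (A := S) (B := T) <| by
    rintro _ ⟨v, rfl⟩
    exact hS ▸ T.mulVec_mem_rangeMod p v
  obtain ⟨V, hV⟩ := exists_mul_eq_of_range_le (A := S) (B := (p : ℤ) • (1 : Matrix ι ι ℤ)) <| by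
    rintro _ ⟨v, rfl⟩
    rw [hS, mulVecLin_apply, smul_mulVec, one_mulVec]
    exact T.smul_mem_rangeMod p v
  have hdvdT : S.det.natAbs ∣ T.det.natAbs :=
    ⟨U.det.natAbs, by rw [← hU, det_mul, Int.natAbs_mul]⟩
  have hdvdp : S.det.natAbs ∣ p ^ Fintype.card ι :=
    ⟨V.det.natAbs, by rw [← Int.natAbs_mul, ← det_mul, hV, det_smul, det_one]; simp⟩
  have hS1 : S.det.natAbs ≠ 1 := by
    intro h1
    apply T.rangeMod_ne_top (Int.natCast_dvd.mpr hpT)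
    rw [← hS, LinearMap.range_eq_top]
    exact mulVec_surjective_iff_isUnit.mpr
      ((isUnit_iff_isUnit_det S).mpr (Int.isUnit_iff_natAbs_eq.mpr h1))
  obtain ⟨k, -, hk⟩ := (Nat.dvd_prime_pow hp).mp hdvdp
  have hk1 : k = 1 := by
    have hk0 : k ≠ 0 := by rintro rfl; exact hS1 hk
    have hk2 : ¬ 2 ≤ k := fun h2 => hp2 ((pow_dvd_pow p h2).trans (hk ▸ hdvdT))
    omega
  exact ⟨S, U, hU, by rw [hk, hk1, pow_one], fun v => hS ▸ LinearMap.mem_range_self _ v⟩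

end Matrix

namespace TernaryForm

def comp (Q : TernaryForm) (S : Matrix (Fin 3) (Fin 3) ℤ) : TernaryForm where
  a := Q.eval (S.col 0)
  b := Q.eval (S.col 1)
  c := Q.eval (S.col 2)
  r := Q.eval (S.col 1 + S.col 2) - Q.eval (S.col 1) - Q.eval (S.col 2)
  s := Q.eval (S.col 2 + S.col 0) - Q.eval (S.col 2) - Q.eval (S.col 0)
  t := Q.eval (S.col 0 + S.col 1) - Q.eval (S.col 0) - Q.eval (S.col 1)

def scale (c : ℤ) (Q : TernaryForm) : TernaryForm :=
  ⟨c * Q.a, c * Q.b, c * Q.c, c * Q.r, c * Q.s, c * Q.t⟩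

@[simp]
lemma eval_comp (Q : TernaryForm) (S : Matrix (Fin 3) (Fin 3) ℤ) (v : Fin 3 → ℤ) :
    (Q.comp S).eval v = Q.eval (S *ᵥ v) := by
  simp only [eval, comp, Int.cast_id, col_apply, mulVec, dotProduct, Fin.sum_univ_three,
    Pi.add_apply]
  ring

@[simp]
lemma eval_scale (c : ℤ) (Q : TernaryForm) (v : Fin 3 → ℤ) :
    (Q.scale c).eval v = c * Q.eval v := by
  simp only [eval, scale, Int.cast_id]
  ring

lemma ext_of_eval {Q Q' : TernaryForm} (h : ∀ v : Fin 3 → ℤ, Q.eval v = Q'.eval v) : Q = Q' := by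
  cases Q; cases Q'
  have h₀ := h ![1, 0, 0]
  have h₁ := h ![0, 1, 0]
  have h₂ := h ![0, 0, 1]
  have h₁₂ := h ![0, 1, 1]
  have h₂₀ := h ![1, 0, 1]
  have h₀₁ := h ![1, 1, 0]
  simp only [eval, Int.cast_eq, Fin.isValue, cons_val_zero, cons_val_one, cons_val, one_pow, mul_one,
    ne_eq, OfNat.ofNat_ne_zero, not_false_eq_true, zero_pow, mul_zero, add_zero, zero_add] at h₀ h₁ h₂ h₁₂ h₂₀ h₀₁
  simp only [mk.injEq]
  omega

lemma gram_comp (Q : TernaryForm) (S : Matrix (Fin 3) (Fin 3) ℤ) :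
    (Q.comp S).gram = (S.map (↑))ᵀ * Q.gram * S.map (↑) := by
  ext i j
  fin_cases i <;> fin_cases j <;>
    simp [gram, comp, eval, mul_apply, Fin.sum_univ_three] <;> ring

lemma disc_comp (Q : TernaryForm) (S : Matrix (Fin 3) (Fin 3) ℤ) :
    (Q.comp S).disc = (S.det : ℚ) ^ 2 * Q.disc := by
  rw [disc, disc, gram_comp, det_mul, det_mul, det_transpose, Int.cast_det]
  ring

lemma disc_scale (c : ℤ) (Q : TernaryForm) : (Q.scale c).disc = (c : ℚ) ^ 3 * Q.disc := by
  have hgram : (Q.scale c).gram = (c : ℚ) • Q.gram := by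
    ext i j
    fin_cases i <;> fin_cases j <;> simp [gram, scale] <;> ring
  rw [disc, disc, hgram, det_smul, Fintype.card_fin]

lemma det_sq_mul_disc {N L : TernaryForm} {S : Matrix (Fin 3) (Fin 3) ℤ} {c : ℤ}
    (h : ∀ v, N.eval (S *ᵥ v) = c * L.eval v) : (S.det : ℚ) ^ 2 * N.disc = c ^ 3 * L.disc := by
  rw [← disc_comp, ← disc_scale, ext_of_eval (Q := N.comp S) (Q' := L.scale c) (by simpa using h)]

lemma exists_eq_scale_of_forall_dvd (Q : TernaryForm) {c : ℤ} (h : ∀ v, c ∣ Q.eval v) :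
    ∃ L : TernaryForm, Q = L.scale c := by
  obtain ⟨a, b, c', r, s, t⟩ := Q
  have ha := h ![1, 0, 0]
  have hb := h ![0, 1, 0]
  have hc := h ![0, 0, 1]
  have hr := h ![0, 1, 1]
  have hs := h ![1, 0, 1]
  have ht := h ![1, 1, 0]
  simp only [eval, Int.cast_eq, Fin.isValue, cons_val_zero, cons_val_one, cons_val, one_pow, mul_one,
    ne_eq, OfNat.ofNat_ne_zero, not_false_eq_true, zero_pow, mul_zero, add_zero, zero_add] at ha hb hc hr hs ht
  replace hr := (dvd_add_right (dvd_add hb hc)).mp hr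
  replace hs := (dvd_add_right (dvd_add ha hc)).mp hs
  replace ht := (dvd_add_right (dvd_add ha hb)).mp ht
  exact ⟨⟨a / c, b / c, c' / c, r / c, s / c, t / c⟩,
    by simp [scale, Int.mul_ediv_cancel', *]⟩

lemma eval_modEq (Q : TernaryForm) {m : ℤ} {x y : Fin 3 → ℤ} (h : ∀ i, x i ≡ y i [ZMOD m]) :
    Q.eval x ≡ Q.eval y [ZMOD m] := by
  unfold eval
  gcongr <;> apply h

lemma dvd_eval_of_mem_rangeMod (Q : TernaryForm) {T : Matrix (Fin 3) (Fin 3) ℤ} {m : ℤ}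
    (hT : ∀ w, m ∣ Q.eval (T *ᵥ w)) {x : Fin 3 → ℤ} (hx : x ∈ T.rangeMod m) : m ∣ Q.eval x := by
  obtain ⟨w, hw⟩ := hx
  simpa using dvd_add (Q.eval_modEq hw).symm.dvd (hT w)

lemma disc_ne_zero {Q : TernaryForm} (hQ : Q.PosDef) : Q.disc ≠ 0 := by
  -- `B` is twice the Gram matrix; being integral, it has an integral kernel vector if singular.
  let B : Matrix (Fin 3) (Fin 3) ℤ := !![2 * Q.a, Q.t, Q.s; Q.t, 2 * Q.b, Q.r; Q.s, Q.r, 2 * Q.c]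
  have hB : (B.det : ℚ) = 8 * Q.disc := by
    simp only [B, disc, gram, det_fin_three, Fin.isValue, of_apply, cons_val', cons_val_zero,
      cons_val_one, cons_val, cons_val_fin_one, Int.cast_sub, Int.cast_add, Int.cast_mul,
      Int.cast_ofNat]
    ring
  have hBeval : ∀ v, v ⬝ᵥ B *ᵥ v = 2 * Q.eval v := by
    intro v
    simp only [B, eval, dotProduct, mulVec, Fin.sum_univ_three, Fin.isValue, of_apply, cons_val',
      cons_val_zero, cons_val_one, cons_val, cons_val_fin_one, Int.cast_eq]
    ring
  intro h0
  obtain ⟨v, hv, hBv⟩ := exists_mulVec_eq_zero_iff.mpr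
    (by exact_mod_cast hB.trans (by simp [h0] : (8 : ℚ) * Q.disc = 0))
  have hzero : 2 * Q.eval v = 0 := by rw [← hBeval, hBv, dotProduct_zero]
  have hpos := hQ v hv
  omega

lemma PosDef.of_eval_mulVec {N L : TernaryForm} (hN : N.PosDef) {S : Matrix (Fin 3) (Fin 3) ℤ}
    (hS : S.det ≠ 0) {c : ℤ} (hc : 0 < c) (h : ∀ v, N.eval (S *ᵥ v) = c * L.eval v) :
    L.PosDef := by
  intro v hv
  have hSv : S *ᵥ v ≠ 0 := fun h0 => hS (exists_mulVec_eq_zero_iff.mp ⟨v, hv, h0⟩)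
  exact pos_of_mul_pos_right (h v ▸ hN _ hSv) hc.le

end TernaryForm

lemma repPair_iff_exists_matrix {c : ℕ} (hc : c ≠ 0) {N M : TernaryForm} (hM : M.disc ≠ 0) :
    RepPair c N M ↔ ∃ T : Matrix (Fin 3) (Fin 3) ℤ,
      T.det.natAbs = c ∧ ∀ v, N.eval (T *ᵥ v) = c * M.eval v := by
  have hc' : (c : ℚ) ≠ 0 := Nat.cast_ne_zero.mpr hc
  constructor
  · rintro ⟨hdisc, T, hT⟩
    have hT' : ∀ v, N.eval (LinearMap.toMatrix' T *ᵥ v) = c * M.eval v := by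
      simpa only [LinearMap.toMatrix'_mulVec] using hT
    have hdet := TernaryForm.det_sq_mul_disc hT'
    rw [hdisc, Int.cast_natCast] at hdet
    have hsq : ((LinearMap.toMatrix' T).det : ℚ) ^ 2 = (c : ℚ) ^ 2 := by
      apply mul_right_cancel₀ (mul_ne_zero hc' hM)
      linear_combination hdet
    refine ⟨_, ?_, hT'⟩
    rw [← Int.natAbs_natCast c]
    exact Int.natAbs_eq_iff_sq_eq.mpr (by exact_mod_cast hsq)
  · rintro ⟨T, hTdet, hT⟩
    refine ⟨?_, T.mulVecLin, hT⟩
    have hsq : (T.det : ℚ) ^ 2 = (c : ℚ) ^ 2 := by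
      exact_mod_cast Int.natAbs_eq_iff_sq_eq.mp (hTdet.trans (Int.natAbs_natCast c).symm)
    have hdet := TernaryForm.det_sq_mul_disc hT
    apply mul_left_cancel₀ (pow_ne_zero 2 hc')
    rw [Int.cast_natCast] at hdet
    linear_combination hdet - N.disc * hsq

theorem stmt_2_general (n : ℕ) (hsf : Squarefree n) (N M : TernaryForm)
    (hN : N.PosDef) (hM : M.PosDef) (h : RepPair n N M)
    (p : ℕ) (hp : p.Prime) (hpn : p ∣ n) :
    ∃ L : TernaryForm, L.PosDef ∧ RepPair p N L ∧ RepPair (n / p) L M := by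
  obtain ⟨m, rfl⟩ := hpn
  have hm0 : m ≠ 0 := right_ne_zero_of_mul hsf.ne_zero
  obtain ⟨T, hTdet, hT⟩ := (repPair_iff_exists_matrix hsf.ne_zero (M.disc_ne_zero hM)).mp h
  have hp2 : ¬ p ^ 2 ∣ p * m := fun h2 => hp.one_lt.ne' (Nat.isUnit_iff.mp (hsf p (sq p ▸ h2)))
  obtain ⟨S, U, rfl, hSdet, hSmem⟩ :=
    T.exists_mul_eq_natAbs_det_eq_prime hp (hTdet ▸ dvd_mul_right p m) (hTdet ▸ hp2)
  obtain ⟨L, hL⟩ := (N.comp S).exists_eq_scale_of_forall_dvd (c := p) fun v => by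
    rw [N.eval_comp]
    refine N.dvd_eval_of_mem_rangeMod (fun w => ⟨m * M.eval w, ?_⟩) (hSmem v)
    rw [hT]
    push_cast
    ring
  have hNL : ∀ v, N.eval (S *ᵥ v) = p * L.eval v := fun v => by
    rw [← N.eval_comp, hL, L.eval_scale]
  have hLM : ∀ v, L.eval (U *ᵥ v) = m * M.eval v := fun v => by
    apply mul_left_cancel₀ (Int.natCast_ne_zero.mpr hp.ne_zero)
    rw [← hNL, mulVec_mulVec, hT]
    push_cast
    ring
  have hUdet : U.det.natAbs = m := by
    rw [det_mul, Int.natAbs_mul, hSdet] at hTdet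
    exact Nat.eq_of_mul_eq_mul_left hp.pos hTdet
  have hLpos : L.PosDef := hN.of_eval_mulVec (Int.natAbs_ne_zero.mp (hSdet ▸ hp.ne_zero))
    (Int.natCast_pos.mpr hp.pos) hNL
  refine ⟨L, hLpos, (repPair_iff_exists_matrix hp.ne_zero (L.disc_ne_zero hLpos)).mpr
    ⟨S, hSdet, hNL⟩, ?_⟩
  rw [Nat.mul_div_cancel_left m hp.pos]
  exact (repPair_iff_exists_matrix hm0 (M.disc_ne_zero hM)).mpr ⟨U, hUdet, hLM⟩

/-- A representable pair by square-free scaling `n` factors through any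
prime `p ∣ n`. -/
theorem stmt_2 (n : ℕ) (hn : 0 < n) (hsf : Squarefree n) (N M : TernaryForm)
    (hN : N.PosDef) (hM : M.PosDef) (h : RepPair n N M)
    (p : ℕ) (hp : p.Prime) (hpn : p ∣ n) :
    ∃ L : TernaryForm, L.PosDef ∧ RepPair p N L ∧ RepPair (n / p) L M :=
  stmt_2_general n hsf N M hN hM h p hp hpn
end

section
/- Let p and q be distinct primes, and let N be a primitive positive definite ternary form which is p-hyperbolic with exponent m+1 and q-hyperbolic with exponent m′+1 for some integers m, m′ ≥ 0. If M is a Γ_p-descendant of N and S is a Γ_q-descendant of M, then there exists a Γ_q-descendant M′ of N such that S is a Γ_p-descendant of M′. -/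
/-! Composing the two descents gives an injective `L : ℤ³ → ℤ³` with `Q_N ∘ L = pq·Q_S` and
image of index `pq`. The lattice `K = {x : p x ∈ L(ℤ³)}` has index `q` (it is the preimage of
the `p`-torsion of `ℤ³/L(ℤ³)`, a group of order `pq`), contains `L(ℤ³)` and `qℤ³`, and `Q_N` is
divisible by `q` on `K` since `p² Q_N(x) = Q_N(p x) ∈ pqℤ`. In a basis of `K`, `M' = Q_N / q`
represents `p·Q_S` (through `L`) and `q·Q_N` (through `qℤ³`), hence is primitive, and `L`
factors through `K` by a map of index `p`. -/

namespace TernaryForm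

variable {R : Type*} [CommRing R]

lemma eval_smul (Q : TernaryForm) (n : R) (v : Fin 3 → R) :
    Q.eval (n • v) = n ^ 2 * Q.eval v := by
  simp only [eval, Pi.smul_apply, smul_eq_mul]
  ring

lemma eval_nsmul (Q : TernaryForm) (n : ℕ) (v : Fin 3 → R) :
    Q.eval (n • v) = n ^ 2 * Q.eval v := by
  rw [← Nat.cast_smul_eq_nsmul R, eval_smul]

lemma exists_eval_eq_mul_of_dvd (Q : TernaryForm) (n : ℤ) (h : ∀ v, n ∣ Q.eval v) :
    ∃ Q' : TernaryForm, ∀ v, Q.eval v = n * Q'.eval v := by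
  obtain ⟨a, ha⟩ := h ![1, 0, 0]
  obtain ⟨b, hb⟩ := h ![0, 1, 0]
  obtain ⟨c, hc⟩ := h ![0, 0, 1]
  obtain ⟨r, hr⟩ := h ![0, 1, 1]
  obtain ⟨s, hs⟩ := h ![1, 0, 1]
  obtain ⟨t, ht⟩ := h ![1, 1, 0]
  simp only [eval, Int.cast_id, Matrix.cons_val] at ha hb hc hr hs ht
  refine ⟨⟨a, b, c, r - b - c, s - a - c, t - a - b⟩, fun v => ?_⟩
  simp only [eval, Int.cast_id]
  linear_combination (v 0 ^ 2 - v 2 * v 0 - v 0 * v 1) * ha + (v 1 ^ 2 - v 1 * v 2 - v 0 * v 1) * hb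
    + (v 2 ^ 2 - v 1 * v 2 - v 2 * v 0) * hc + v 1 * v 2 * hr + v 2 * v 0 * hs + v 0 * v 1 * ht

lemma exists_eval_eq_eval_comp (Q : TernaryForm) (T : (Fin 3 → ℤ) →+ (Fin 3 → ℤ)) :
    ∃ Q' : TernaryForm, ∀ v, Q'.eval v = Q.eval (T v) := by
  set x := T (Pi.single 0 1)
  set y := T (Pi.single 1 1)
  set z := T (Pi.single 2 1)
  refine ⟨⟨Q.eval x, Q.eval y, Q.eval z, Q.eval (y + z) - Q.eval y - Q.eval z,
    Q.eval (z + x) - Q.eval z - Q.eval x, Q.eval (x + y) - Q.eval x - Q.eval y⟩, fun v => ?_⟩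
  have hTv : T v = v 0 • x + v 1 • y + v 2 • z := by
    have hv : v = v 0 • Pi.single 0 1 + v 1 • Pi.single 1 1 + v 2 • Pi.single 2 1 := by
      ext i; fin_cases i <;> simp
    conv_lhs => rw [hv]
    simp only [map_add, map_zsmul, x, y, z]
  rw [hTv]
  simp only [eval, Int.cast_id, Pi.add_apply, Pi.smul_apply, smul_eq_mul]
  ring

lemma exists_eval_comp_eq_mul (Q : TernaryForm) (T : (Fin 3 → ℤ) →+ (Fin 3 → ℤ)) (n : ℤ)
    (h : ∀ v, n ∣ Q.eval (T v)) : ∃ Q' : TernaryForm, ∀ v, Q.eval (T v) = n * Q'.eval v := by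
  obtain ⟨P, hP⟩ := Q.exists_eval_eq_eval_comp T
  obtain ⟨Q', hQ'⟩ := P.exists_eval_eq_mul_of_dvd n fun v => hP v ▸ h v
  exact ⟨Q', fun v => hP v ▸ hQ' v⟩

lemma eval_eq_mul_of_comp_eq {N M S : TernaryForm} {n k : ℤ} (hn : n ≠ 0)
    {T U f : (Fin 3 → ℤ) →+ (Fin 3 → ℤ)} (hT : ∀ v, N.eval (T v) = n * M.eval v)
    (hU : T.comp U = f) (hf : ∀ v, N.eval (f v) = n * (k * S.eval v)) (v : Fin 3 → ℤ) :
    M.eval (U v) = k * S.eval v :=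
  mul_left_cancel₀ hn (by rw [← hT, ← AddMonoidHom.comp_apply, hU, hf])

lemma dvd_eval_of_nsmul_mem_range {N S : TernaryForm} {p q : ℕ} (hpq : p.Coprime q)
    {L : (Fin 3 → ℤ) →+ (Fin 3 → ℤ)} (hL : ∀ v, N.eval (L v) = q * (p * S.eval v))
    {x : Fin 3 → ℤ} (hx : p • x ∈ L.range) : (q : ℤ) ∣ N.eval x := by
  obtain ⟨v, hv⟩ := hx
  have hcop : IsCoprime (q : ℤ) ((p : ℤ) ^ 2) :=
    (Nat.isCoprime_iff_coprime.2 hpq.symm).pow_right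
  refine hcop.dvd_of_dvd_mul_left ⟨p * S.eval v, ?_⟩
  rw [← N.eval_nsmul, ← hv, hL]

lemma PosDef.of_eval_comp_eq_mul {N M : TernaryForm} (hN : N.PosDef)
    {T : (Fin 3 → ℤ) →+ (Fin 3 → ℤ)} (hT : Function.Injective T) {n : ℤ} (hn : 0 < n)
    (h : ∀ v, N.eval (T v) = n * M.eval v) : M.PosDef := fun v hv =>
  pos_of_mul_pos_right (h v ▸ hN (T v) ((map_ne_zero_iff T hT).2 hv)) hn.le

lemma normIdeal_range_eq_mul {N M : TernaryForm} {T : (Fin 3 → ℤ) → (Fin 3 → ℤ)} {n : ℤ}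
    (h : ∀ v, N.eval (T v) = n * M.eval v) :
    N.normIdeal (Set.range T) = Ideal.span {n} * M.normIdeal Set.univ := by
  rw [normIdeal, normIdeal, Ideal.span_mul_span', Set.singleton_mul, Set.image_univ,
    ← Set.range_comp, ← Set.range_comp]
  exact congrArg _ (congrArg _ (funext h))

lemma span_singleton_le_normIdeal {M S : TernaryForm} (hS : S.Primitive)
    {T : (Fin 3 → ℤ) → (Fin 3 → ℤ)} {n : ℤ} (h : ∀ v, M.eval (T v) = n * S.eval v) :
    Ideal.span {n} ≤ M.normIdeal Set.univ := by
  calc Ideal.span {n} = M.normIdeal (Set.range T) := by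
        rw [normIdeal_range_eq_mul h, (hS : S.normIdeal Set.univ = ⊤), Ideal.mul_top]
    _ ≤ M.normIdeal Set.univ := Ideal.span_mono (Set.image_mono (Set.subset_univ _))

lemma Primitive.of_isCoprime {M N S : TernaryForm} (hN : N.Primitive) (hS : S.Primitive)
    {a b : ℤ} (hab : IsCoprime a b) {f g : (Fin 3 → ℤ) → (Fin 3 → ℤ)}
    (hf : ∀ v, M.eval (f v) = a * N.eval v) (hg : ∀ v, M.eval (g v) = b * S.eval v) :
    M.Primitive := by
  rw [Primitive, eq_top_iff,
    ← Ideal.isCoprime_iff_sup_eq.1 ((Ideal.isCoprime_span_singleton_iff a b).2 hab)]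
  exact sup_le (span_singleton_le_normIdeal hN hf) (span_singleton_le_normIdeal hS hg)

end TernaryForm

open TernaryForm in
lemma gammaDescendant_iff {p : ℕ} (hp : p ≠ 0) {M N : TernaryForm} :
    GammaDescendant p M N ↔ M.Primitive ∧ ∃ T : (Fin 3 → ℤ) →+ (Fin 3 → ℤ),
      Function.Injective T ∧ T.range.index = p ∧ ∀ v, N.eval (T v) = p * M.eval v := by
  constructor
  · rintro ⟨K, hK, hnorm, T, hT, hrange, heval⟩
    have hKT : T.range = K := SetLike.coe_injective (by rw [AddMonoidHom.coe_range, hrange])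
    refine ⟨?_, T, hT, by rw [hKT, hK], heval⟩
    rw [← hrange, normIdeal_range_eq_mul heval] at hnorm
    exact (Ideal.span_singleton_mul_right_inj (by exact_mod_cast hp)).1
      (hnorm.trans (Ideal.mul_top _).symm)
  · rintro ⟨hM, T, hT, hK, heval⟩
    refine ⟨T.range, hK, ?_, T, hT, AddMonoidHom.coe_range T, heval⟩
    rw [AddMonoidHom.coe_range, normIdeal_range_eq_mul heval, (hM : M.normIdeal Set.univ = ⊤),
      Ideal.mul_top]

lemma AddMonoidHom.index_range_comp {G : Type*} [AddGroup G] {f : G →+ G}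
    (hf : Function.Injective f) (g : G →+ G) :
    (f.comp g).range.index = g.range.index * f.range.index := by
  rw [range_comp, AddSubgroup.index_map, (ker_eq_bot_iff f).2 hf, sup_bot_eq]

lemma AddMonoidHom.exists_comp_eq_of_range_le {G H : Type*} [AddGroup G] [AddGroup H]
    {f : G →+ H} (hf : Function.Injective f) {g : G →+ H} (hg : g.range ≤ f.range) :
    ∃ u : G →+ G, f.comp u = g :=
  ⟨(ofInjective hf).symm.toAddMonoidHom.comp (g.codRestrict f.range fun x => hg ⟨x, rfl⟩), by
    ext x; simp⟩

lemma exists_injective_range_eq_of_index_ne_zero {ι : Type*} [Finite ι]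
    {K : AddSubgroup (ι → ℤ)} (hK : K.index ≠ 0) :
    ∃ T : (ι → ℤ) →+ (ι → ℤ), Function.Injective T ∧ T.range = K := by
  obtain ⟨e⟩ := Int.addSubgroup_index_ne_zero_iff.1 hK
  refine ⟨K.subtype.comp e.symm.toAddMonoidHom, Subtype.val_injective.comp e.symm.injective, ?_⟩
  rw [AddMonoidHom.range_comp, e.symm.toAddMonoidHom.range_eq_top.2 e.symm.surjective,
    ← AddMonoidHom.range_eq_map, AddSubgroup.range_subtype]

lemma index_ker_nsmul_of_card_eq_mul {G : Type*} [AddCommGroup G] {p q : ℕ} [Fact p.Prime]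
    [Fact q.Prime] (hpq : p ≠ q) (hG : Nat.card G = p * q) :
    (nsmulAddMonoidHom p : G →+ G).ker.index = q := by
  have hp : p.Prime := Fact.out
  have hq : q.Prime := Fact.out
  have : Finite G := Nat.finite_of_card_ne_zero (by simp [hG, hp.ne_zero, hq.ne_zero])
  set H := (nsmulAddMonoidHom p : G →+ G).ker
  have hH : Nat.card H * H.index = p * q := hG ▸ H.card_mul_index
  have hpH : p ∣ Nat.card H := by
    obtain ⟨x, hx⟩ := exists_prime_addOrderOf_dvd_card' (G := G) p (hG ▸ dvd_mul_right p q)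
    have hxH : x ∈ H := by simp [H, ← hx]
    exact hx ▸ (AddSubgroup.addOrderOf_mk x hxH ▸ addOrderOf_dvd_natCard (⟨x, hxH⟩ : H))
  have hqH : ¬ q ∣ Nat.card H := by
    intro hqH
    obtain ⟨y, hy⟩ := exists_prime_addOrderOf_dvd_card' (G := H) q hqH
    have hpy : p • y = 0 := Subtype.ext y.2
    exact hpq ((Nat.prime_dvd_prime_iff_eq hq hp).1 (hy ▸ addOrderOf_dvd_of_nsmul_eq_zero hpy)).symm
  obtain ⟨k, hk⟩ := hpH
  have hkq : k ∣ q := by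
    rw [hk, mul_assoc] at hH
    exact ⟨H.index, Nat.eq_of_mul_eq_mul_left hp.pos hH.symm⟩
  rcases hq.eq_one_or_self_of_dvd k hkq with hk1 | hkq
  · rw [hk, hk1, mul_one] at hH
    exact Nat.eq_of_mul_eq_mul_left hp.pos hH
  · rw [hk, hkq] at hqH
    exact absurd (dvd_mul_left q p) hqH

lemma AddSubgroup.index_comap_nsmul_of_index_eq_mul {G : Type*} [AddCommGroup G] {p q : ℕ}
    [Fact p.Prime] [Fact q.Prime] (hpq : p ≠ q) {J : AddSubgroup G} (hJ : J.index = p * q) :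
    (J.comap (nsmulAddMonoidHom p)).index = q := by
  have hJ' : J.comap (nsmulAddMonoidHom p) =
      (nsmulAddMonoidHom p : G ⧸ J →+ G ⧸ J).ker.comap (QuotientAddGroup.mk' J) := by
    ext x
    simp [← QuotientAddGroup.mk_nsmul, QuotientAddGroup.eq_zero_iff]
  rw [hJ', index_comap_of_surjective _ (QuotientAddGroup.mk'_surjective J)]
  exact index_ker_nsmul_of_card_eq_mul hpq hJ

lemma GammaDescendant.exists_comp {p q : ℕ} (hp : p ≠ 0) (hq : q ≠ 0) {N M S : TernaryForm}
    (h1 : GammaDescendant p M N) (h2 : GammaDescendant q S M) :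
    S.Primitive ∧ ∃ L : (Fin 3 → ℤ) →+ (Fin 3 → ℤ), Function.Injective L ∧
      L.range.index = q * p ∧ ∀ v, N.eval (L v) = q * (p * S.eval v) := by
  obtain ⟨-, T₁, hT₁, hidx₁, hN₁⟩ := (gammaDescendant_iff hp).1 h1
  obtain ⟨hS, T₂, hT₂, hidx₂, hM₂⟩ := (gammaDescendant_iff hq).1 h2
  refine ⟨hS, T₁.comp T₂, hT₁.comp hT₂, by rw [T₁.index_range_comp hT₁, hidx₁, hidx₂],
    fun v => ?_⟩
  rw [AddMonoidHom.comp_apply, hN₁, hM₂, mul_left_comm]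

lemma exists_intermediate_lattice {p q : ℕ} [Fact p.Prime] [Fact q.Prime] (hpq : p ≠ q)
    {L : (Fin 3 → ℤ) →+ (Fin 3 → ℤ)} (hL : L.range.index = q * p) :
    ∃ T : (Fin 3 → ℤ) →+ (Fin 3 → ℤ), Function.Injective T ∧ T.range.index = q ∧
      (∀ v, p • T v ∈ L.range) ∧ L.range ≤ T.range ∧ (nsmulAddMonoidHom q).range ≤ T.range := by
  set K := L.range.comap (nsmulAddMonoidHom p)
  have hK : K.index = q :=
    AddSubgroup.index_comap_nsmul_of_index_eq_mul hpq (by rw [hL, mul_comm])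
  obtain ⟨T, hT, hTK⟩ :=
    exists_injective_range_eq_of_index_ne_zero (hK ▸ (Fact.out : q.Prime).ne_zero)
  refine ⟨T, hT, hTK ▸ hK, fun v => (hTK ▸ ⟨v, rfl⟩ : T v ∈ K), hTK ▸ ?_, hTK ▸ ?_⟩
  · exact fun _ hx => L.range.nsmul_mem hx p
  · rintro _ ⟨v, rfl⟩
    show p • q • v ∈ L.range
    rw [smul_smul, mul_comm, ← hL]
    exact L.range.nsmul_index_mem v

theorem stmt_4_general (p q : ℕ) [Fact p.Prime] [Fact q.Prime] (hpq : p ≠ q)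
    (N : TernaryForm) (hN : N.PosDef) (hNprim : N.Primitive)
    (M S : TernaryForm)
    (h1 : GammaDescendant p M N) (h2 : GammaDescendant q S M) :
    ∃ M' : TernaryForm, M'.PosDef ∧ GammaDescendant q M' N ∧ GammaDescendant p S M' := by
  have hp : p.Prime := Fact.out
  have hq : q.Prime := Fact.out
  have hq0 : (q : ℤ) ≠ 0 := by exact_mod_cast hq.ne_zero
  have hcop : p.Coprime q := (Nat.coprime_primes hp hq).2 hpq
  obtain ⟨hSprim, L, hL, hLidx, hNL⟩ := h1.exists_comp hp.ne_zero hq.ne_zero h2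
  obtain ⟨T, hT, hTidx, hpT, hLT, hqT⟩ := exists_intermediate_lattice hpq hLidx
  obtain ⟨M', hM'⟩ := N.exists_eval_comp_eq_mul T q fun v =>
    TernaryForm.dvd_eval_of_nsmul_mem_range hcop hNL (hpT v)
  obtain ⟨U, hU⟩ := T.exists_comp_eq_of_range_le hT hLT
  obtain ⟨V, hV⟩ := T.exists_comp_eq_of_range_le hT hqT
  have hM'U := TernaryForm.eval_eq_mul_of_comp_eq hq0 hM' hU hNL
  have hM'V := TernaryForm.eval_eq_mul_of_comp_eq (k := q) (S := N) hq0 hM' hV fun v => by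
    rw [nsmulAddMonoidHom_apply, N.eval_nsmul, sq, mul_assoc]
  have hUidx := T.index_range_comp hT U
  rw [hU, hLidx, hTidx, mul_comm q p] at hUidx
  refine ⟨M', hN.of_eval_comp_eq_mul hT (by exact_mod_cast hq.pos) hM',
    (gammaDescendant_iff hq.ne_zero).2
      ⟨hSprim.of_isCoprime hNprim (Nat.isCoprime_iff_coprime.2 hcop) hM'U hM'V, T, hT, hTidx, hM'⟩,
    (gammaDescendant_iff hp.ne_zero).2 ⟨hSprim, U, ?_, ?_, hM'U⟩⟩
  · exact .of_comp (f := T) (by rw [← AddMonoidHom.coe_comp, hU]; exact hL)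
  · exact (Nat.eq_of_mul_eq_mul_right hq.pos hUidx).symm

/-- For distinct primes `p, q` and `N` both `p`- and `q`-hyperbolic with
positive exponents, `Γ_p`- and `Γ_q`-descendants can be exchanged. -/
theorem stmt_4 (p q : ℕ) [Fact p.Prime] [Fact q.Prime] (hpq : p ≠ q)
    (N : TernaryForm) (hN : N.PosDef) (hNprim : N.Primitive)
    (m m' : ℕ) (hhp : IsHyperbolic p (m + 1) N) (hhq : IsHyperbolic q (m' + 1) N)
    (M S : TernaryForm) (hM : M.PosDef) (hS : S.PosDef)
    (h1 : GammaDescendant p M N) (h2 : GammaDescendant q S M) :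
    ∃ M' : TernaryForm, M'.PosDef ∧ GammaDescendant q M' N ∧ GammaDescendant p S M' :=
  stmt_4_general p q hpq N hN hNprim M S h1 h2
end
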